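/- Let (T, F) be a torsion theory in an exact category A and let 0 → X → Y → Z → 0 be an almost split sequence in A. If Z ∈ T is not Ext-projective, then T has an almost split sequence 0 → t(X) → t(Y) → Z → 0, where t denotes the torsion subobject. -/
import Mathlib


open CategoryTheory CategoryTheory.Limits

attribute [local instance] CategoryTheory.Abelian.hasFiniteBiproducts

universe v u

namespace AlmostSplit

variable (R : Type v) [CommRing R]
variable {C : Type u} [Category.{v} C] [Abelian C]

/-- `P` is an extension-closed (full, replete) subcategory predicate, i.e. an exact
subcategory of the abelian category `C`. -/
def ExtClosed (P : C → Prop) : Prop :=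
  ∀ ⦃X Y Z : C⦄ (f : X ⟶ Y) (g : Y ⟶ Z) (w : f ≫ g = 0),
    (ShortComplex.mk f g w).ShortExact → P X → P Z → P Y

/-- `f` is a proper (admissible) monomorphism of the exact subcategory `P`:
it fits into a short exact sequence whose cokernel term lies in `P`. -/
def AdmMono (P : C → Prop) {X Y : C} (f : X ⟶ Y) : Prop :=
  ∃ (Z : C) (g : Y ⟶ Z) (w : f ≫ g = 0), (ShortComplex.mk f g w).ShortExact ∧ P Z

/-- `g` is a proper (admissible) epimorphism of the exact subcategory `P`. -/
def AdmEpi (P : C → Prop) {Y Z : C} (g : Y ⟶ Z) : Prop :=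
  ∃ (X : C) (f : X ⟶ Y) (w : f ≫ g = 0), (ShortComplex.mk f g w).ShortExact ∧ P X

/-- `u : X ⟶ Y` is injectively trivial: it factors through every proper monomorphism
out of `X` (with target in the subcategory). -/
def ITriv (P : C → Prop) {X Y : C} (u : X ⟶ Y) : Prop :=
  ∀ ⦃M : C⦄ (v : X ⟶ M), P M → AdmMono P v → ∃ w : M ⟶ Y, v ≫ w = u

/-- `u : X ⟶ Y` is projectively trivial: it factors through every proper epimorphism
onto `Y` (with source in the subcategory). -/
def PTriv (P : C → Prop) {X Y : C} (u : X ⟶ Y) : Prop :=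
  ∀ ⦃M : C⦄ (v : M ⟶ Y), P M → AdmEpi P v → ∃ w : X ⟶ M, w ≫ v = u

def IsSection {X Y : C} (f : X ⟶ Y) : Prop := ∃ r : Y ⟶ X, f ≫ r = 𝟙 X

def IsRetraction {Y Z : C} (g : Y ⟶ Z) : Prop := ∃ s : Z ⟶ Y, s ≫ g = 𝟙 Z

def LeftAlmostSplit (P : C → Prop) {X Y : C} (f : X ⟶ Y) : Prop :=
  ¬ IsSection f ∧ ∀ ⦃M : C⦄, P M → ∀ u : X ⟶ M, ¬ IsSection u → ∃ h : Y ⟶ M, f ≫ h = u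

def RightAlmostSplit (P : C → Prop) {Y Z : C} (g : Y ⟶ Z) : Prop :=
  ¬ IsRetraction g ∧ ∀ ⦃M : C⦄, P M → ∀ u : M ⟶ Z, ¬ IsRetraction u → ∃ h : M ⟶ Y, h ≫ g = u

/-- `0 → X –f→ Y –g→ Z → 0` is an almost split sequence of the exact subcategory `P`:
`f` is minimal left almost split and `g` is minimal right almost split. -/
def AlmostSplitSeq (P : C → Prop) {X Y Z : C} (f : X ⟶ Y) (g : Y ⟶ Z) : Prop :=
  LeftAlmostSplit P f ∧ (∀ h : Y ⟶ Y, f ≫ h = f → IsIso h) ∧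
    RightAlmostSplit P g ∧ (∀ h : Y ⟶ Y, h ≫ g = g → IsIso h)

/-- `Z` is Ext-projective in the exact subcategory `P`: every proper epimorphism
(of the subcategory) onto `Z` is a retraction. -/
def ExtProjective (P : C → Prop) (Z : C) : Prop :=
  ∀ ⦃X Y : C⦄ (f : X ⟶ Y) (g : Y ⟶ Z) (w : f ≫ g = 0),
    (ShortComplex.mk f g w).ShortExact → P X → P Y → IsRetraction g

/-- `X` is Ext-injective in the exact subcategory `P`. -/
def ExtInjective (P : C → Prop) (X : C) : Prop :=
  ∀ ⦃Y Z : C⦄ (f : X ⟶ Y) (g : Y ⟶ Z) (w : f ≫ g = 0),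
    (ShortComplex.mk f g w).ShortExact → P Y → P Z → IsSection f

/-- An object is indecomposable. -/
def Indec (X : C) : Prop :=
  ¬ IsZero X ∧ ∀ (A B : C), (X ≅ A ⊞ B) → (IsZero A ∨ IsZero B)

section Linear

variable [Linear R C]

/-- The injectively trivial morphisms form an `R`-submodule of `Hom(X, Y)`. -/
def ITrivSub (P : C → Prop) (X Y : C) : Submodule R (X ⟶ Y) where
  carrier := {u | ITriv P u}
  add_mem' := by
    intro a b ha hb M v hM hv
    obtain ⟨w1, h1⟩ := ha v hM hv
    obtain ⟨w2, h2⟩ := hb v hM hv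
    exact ⟨w1 + w2, by rw [Preadditive.comp_add, h1, h2]⟩
  zero_mem' := by
    intro M v hM hv
    exact ⟨0, by simp⟩
  smul_mem' := by
    intro c a ha M v hM hv
    obtain ⟨w, h⟩ := ha v hM hv
    exact ⟨c • w, by rw [Linear.comp_smul, h]⟩

/-- The projectively trivial morphisms form an `R`-submodule of `Hom(X, Y)`. -/
def PTrivSub (P : C → Prop) (X Y : C) : Submodule R (X ⟶ Y) where
  carrier := {u | PTriv P u}
  add_mem' := by
    intro a b ha hb M v hM hv
    obtain ⟨w1, h1⟩ := ha v hM hv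
    obtain ⟨w2, h2⟩ := hb v hM hv
    exact ⟨w1 + w2, by rw [Preadditive.add_comp, h1, h2]⟩
  zero_mem' := by
    intro M v hM hv
    exact ⟨0, by simp⟩
  smul_mem' := by
    intro c a ha M v hM hv
    obtain ⟨w, h⟩ := ha v hM hv
    exact ⟨c • w, by rw [Linear.smul_comp, h]⟩

/-- Morphism module of the injectively stable category `Ā`. -/
abbrev HomBar (P : C → Prop) (X Y : C) := (X ⟶ Y) ⧸ ITrivSub R P X Y

/-- Morphism module of the projectively stable category `A̲`. -/
abbrev HomUnder (P : C → Prop) (X Y : C) := (X ⟶ Y) ⧸ PTrivSub R P X Y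

end Linear

/-- An axiomatization of the bifunctor `Ext¹` of the exact subcategory `P` (equivalence
classes of short exact sequences in `P` under Baer sum), with its `R`-module structure,
pushout and pullback actions. -/
structure ExtTheory (P : C → Prop) : Type (max u (v + 1)) where
  ext : C → C → ModuleCat.{v} R
  push : ∀ {Z X X' : C}, (X ⟶ X') → (ext Z X ⟶ ext Z X')
  pull : ∀ {Z' Z X : C}, (Z' ⟶ Z) → (ext Z X ⟶ ext Z' X)
  push_id : ∀ (Z X : C), push (Z := Z) (𝟙 X) = 𝟙 (ext Z X)
  push_comp : ∀ {Z X X' X'' : C} (u : X ⟶ X') (v : X' ⟶ X''),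
    push (Z := Z) (u ≫ v) = push u ≫ push v
  pull_id : ∀ (Z X : C), pull (X := X) (𝟙 Z) = 𝟙 (ext Z X)
  pull_comp : ∀ {Z'' Z' Z X : C} (u : Z'' ⟶ Z') (v : Z' ⟶ Z),
    pull (X := X) (u ≫ v) = pull v ≫ pull u
  push_pull : ∀ {Z' Z X X' : C} (u : X ⟶ X') (v : Z' ⟶ Z),
    push u ≫ pull v = pull v ≫ push (Z := Z') u
  ofSES : ∀ {X Y Z : C} (f : X ⟶ Y) (g : Y ⟶ Z) (w : f ≫ g = 0),
    (ShortComplex.mk f g w).ShortExact → P X → P Y → P Z → ext Z X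
  ofSES_eq_zero_iff : ∀ {X Y Z : C} (f : X ⟶ Y) (g : Y ⟶ Z) (w : f ≫ g = 0)
    (hse : (ShortComplex.mk f g w).ShortExact) (hX : P X) (hY : P Y) (hZ : P Z),
    ofSES f g w hse hX hY hZ = 0 ↔ IsSection f
  ofSES_surj : ∀ {Z X : C} (hZ : P Z) (hX : P X) (e : ext Z X),
    ∃ (Y : C) (f : X ⟶ Y) (g : Y ⟶ Z) (w : f ≫ g = 0)
      (hse : (ShortComplex.mk f g w).ShortExact) (hY : P Y),
      ofSES f g w hse hX hY hZ = e
  push_ofSES : ∀ {X Y Z X' Y' : C} (f : X ⟶ Y) (g : Y ⟶ Z) (w : f ≫ g = 0)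
    (hse : (ShortComplex.mk f g w).ShortExact) (hX : P X) (hY : P Y) (hZ : P Z)
    (f' : X' ⟶ Y') (g' : Y' ⟶ Z) (w' : f' ≫ g' = 0)
    (hse' : (ShortComplex.mk f' g' w').ShortExact) (hX' : P X') (hY' : P Y')
    (u : X ⟶ X') (vv : Y ⟶ Y'), f ≫ vv = u ≫ f' → vv ≫ g' = g →
    push u (ofSES f g w hse hX hY hZ) = ofSES f' g' w' hse' hX' hY' hZ
  pull_ofSES : ∀ {X Y Z Y' Z' : C} (f : X ⟶ Y) (g : Y ⟶ Z) (w : f ≫ g = 0)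
    (hse : (ShortComplex.mk f g w).ShortExact) (hX : P X) (hY : P Y) (hZ : P Z)
    (f' : X ⟶ Y') (g' : Y' ⟶ Z') (w' : f' ≫ g' = 0)
    (hse' : (ShortComplex.mk f' g' w').ShortExact) (hY' : P Y') (hZ' : P Z')
    (t : Z' ⟶ Z) (vv : Y' ⟶ Y), f' ≫ vv = f → g' ≫ t = vv ≫ g →
    pull t (ofSES f g w hse hX hY hZ) = ofSES f' g' w' hse' hX hY' hZ'

/-- A cogenerator of `Mod R`. -/
def IsCogenerator (I : Type v) [AddCommGroup I] [Module R I] : Prop :=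
  ∀ (M : Type v) [AddCommGroup M] [Module R M] (m : M), m ≠ 0 → ∃ φ : M →ₗ[R] I, φ m ≠ 0

/-- The minimal injective cogenerator of `Mod R`: an injective cogenerator embedding
into every injective cogenerator. -/
def IsMinimalInjectiveCogenerator (I : Type v) [AddCommGroup I] [Module R I] : Prop :=
  Module.Injective R I ∧ IsCogenerator R I ∧
    ∀ (J : Type v) [AddCommGroup J] [Module R J], Module.Injective R J →
      IsCogenerator R J → ∃ ι : I →ₗ[R] J, Function.Injective ι

end AlmostSplit
namespace AlmostSplit

variable {C : Type u} [Category.{v} C] [Abelian C]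

/-- `M` is a (nonzero or zero) Krull-Schmidt object: a finite direct sum of objects with
local endomorphism rings. -/
def KSObject (M : C) : Prop :=
  ∃ (n : ℕ) (Xi : Fin n → C) (_ : M ≅ ⨁ Xi), ∀ i, IsLocalRing (End (Xi i))

/-- The exact subcategory `P` has right almost split sequences. -/
def HasRightASS (P : C → Prop) : Prop :=
  ∀ ⦃Z : C⦄, P Z → Indec Z → ¬ ExtProjective P Z →
    ∃ (X Y : C) (f : X ⟶ Y) (g : Y ⟶ Z) (w : f ≫ g = 0)
      (_ : (ShortComplex.mk f g w).ShortExact), P X ∧ P Y ∧ AlmostSplitSeq P f g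

/-- The exact subcategory `P` has left almost split sequences. -/
def HasLeftASS (P : C → Prop) : Prop :=
  ∀ ⦃X : C⦄, P X → Indec X → ¬ ExtInjective P X →
    ∃ (Y Z : C) (f : X ⟶ Y) (g : Y ⟶ Z) (w : f ≫ g = 0)
      (_ : (ShortComplex.mk f g w).ShortExact), P Y ∧ P Z ∧ AlmostSplitSeq P f g

/-- `f : M ⟶ X` is a right injectively stable `Q`-approximation of `X`, relative to the
ambient exact subcategory `P`. -/
def RightInjStableApprox (P Q : C → Prop) {M X : C} (f : M ⟶ X) : Prop :=
  Q M ∧ ∀ ⦃L : C⦄, Q L → ∀ h : L ⟶ X, ∃ u : L ⟶ M, ITriv P (h - u ≫ f)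

/-- The image of `f` in the injectively stable category is right minimal. -/
def RightMinimalBar (P : C → Prop) {M X : C} (f : M ⟶ X) : Prop :=
  ∀ h : M ⟶ M, ITriv P (h ≫ f - f) →
    ∃ h' : M ⟶ M, ITriv P (h ≫ h' - 𝟙 M) ∧ ITriv P (h' ≫ h - 𝟙 M)

/-- Minimal right injectively stable `Q`-approximation. -/
def MinRightInjStableApprox (P Q : C → Prop) {M X : C} (f : M ⟶ X) : Prop :=
  RightInjStableApprox P Q f ∧ RightMinimalBar P f ∧
    ∀ (N : C) (u : N ⟶ M) (r : M ⟶ N), u ≫ r = 𝟙 N → ExtInjective P N → IsZero N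

/-- `g : X ⟶ N` is a left projectively stable `Q`-approximation of `X`. -/
def LeftProjStableApprox (P Q : C → Prop) {X N : C} (g : X ⟶ N) : Prop :=
  Q N ∧ ∀ ⦃L : C⦄, Q L → ∀ h : X ⟶ L, ∃ u : N ⟶ L, PTriv P (h - g ≫ u)

/-- The image of `g` in the projectively stable category is left minimal. -/
def LeftMinimalUnder (P : C → Prop) {X N : C} (g : X ⟶ N) : Prop :=
  ∀ h : N ⟶ N, PTriv P (g ≫ h - g) →
    ∃ h' : N ⟶ N, PTriv P (h ≫ h' - 𝟙 N) ∧ PTriv P (h' ≫ h - 𝟙 N)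

/-- Minimal left projectively stable `Q`-approximation. -/
def MinLeftProjStableApprox (P Q : C → Prop) {X N : C} (g : X ⟶ N) : Prop :=
  LeftProjStableApprox P Q g ∧ LeftMinimalUnder P g ∧
    ∀ (L : C) (u : L ⟶ N) (r : N ⟶ L), u ≫ r = 𝟙 L → ExtProjective P L → IsZero L

end AlmostSplit
namespace AlmostSplit

variable {C : Type u} [Category.{v} C] [Abelian C]

/-- If `𝟙 P + u ≫ v` is invertible, then so is `𝟙 Q + v ≫ u`. -/
lemma isIso_one_add_swap {P Q : C} (u : P ⟶ Q) (v : Q ⟶ P)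
    (h : IsIso (𝟙 P + u ≫ v)) : IsIso (𝟙 Q + v ≫ u) := by
  have key1 : (𝟙 Q + v ≫ u) ≫ (v ≫ inv (𝟙 P + u ≫ v) ≫ u) = v ≫ u := by
    have e : (𝟙 Q + v ≫ u) ≫ (v ≫ inv (𝟙 P + u ≫ v) ≫ u)
        = v ≫ ((𝟙 P + u ≫ v) ≫ inv (𝟙 P + u ≫ v)) ≫ u := by
      simp only [Preadditive.add_comp, Preadditive.comp_add, Category.id_comp,
        Category.assoc]
    rw [e, IsIso.hom_inv_id, Category.id_comp]
  have key2 : (v ≫ inv (𝟙 P + u ≫ v) ≫ u) ≫ (𝟙 Q + v ≫ u) = v ≫ u := by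
    have e : (v ≫ inv (𝟙 P + u ≫ v) ≫ u) ≫ (𝟙 Q + v ≫ u)
        = v ≫ (inv (𝟙 P + u ≫ v) ≫ (𝟙 P + u ≫ v)) ≫ u := by
      simp only [Preadditive.add_comp, Preadditive.comp_add, Category.comp_id,
        Category.id_comp, Category.assoc]
    rw [e, IsIso.inv_hom_id, Category.id_comp]
  refine ⟨𝟙 Q - v ≫ inv (𝟙 P + u ≫ v) ≫ u, ?_, ?_⟩
  · rw [Preadditive.comp_sub, Category.comp_id, key1]
    abel
  · rw [Preadditive.sub_comp, Category.id_comp, key2]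
    abel

/-- Pushout of a short exact sequence `0 → A → B → D → 0` along `u : A ⟶ M`. -/
lemma pushout_ses {A B D : C} (i : A ⟶ B) (p : B ⟶ D) (w : i ≫ p = 0)
    (hse : (ShortComplex.mk i p w).ShortExact) {M : C} (u : A ⟶ M) :
    ∃ (E : C) (e1 : B ⟶ E) (e2 : M ⟶ E) (π : E ⟶ D) (w2 : e2 ≫ π = 0),
      (ShortComplex.mk e2 π w2).ShortExact ∧ i ≫ e1 = u ≫ e2 ∧ e1 ≫ π = p := by
  haveI : Mono i := hse.mono_f
  haveI : Epi p := hse.epi_g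
  haveI := hse.mono_f
  have hw : i ≫ p = u ≫ (0 : M ⟶ D) := by rw [w, comp_zero]
  set π : pushout i u ⟶ D := pushout.desc p 0 hw with hπ
  have hinl : pushout.inl i u ≫ π = p := pushout.inl_desc _ _ _
  have hinr : pushout.inr i u ≫ π = 0 := pushout.inr_desc _ _ _
  haveI : Mono (pushout.inr i u) := Abelian.mono_pushout_of_mono_f i u
  haveI : Epi π := epi_of_epi_fac hinl
  set φ : B ⊞ M ⟶ pushout i u := biprod.desc (pushout.inl i u) (pushout.inr i u)
    with hφ
  haveI : Epi φ := by
    constructor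
    intro Q a b hab
    apply pushout.hom_ext
    · have h1 : (biprod.inl ≫ φ) ≫ a = (biprod.inl ≫ φ) ≫ b := by
        rw [Category.assoc, Category.assoc, hab]
      simpa [hφ] using h1
    · have h1 : (biprod.inr ≫ φ) ≫ a = (biprod.inr ≫ φ) ≫ b := by
        rw [Category.assoc, Category.assoc, hab]
      simpa [hφ] using h1
  have hex : (ShortComplex.mk (pushout.inr i u) π hinr).Exact := by
    rw [ShortComplex.exact_iff_exact_up_to_refinements]
    intro W k hk
    obtain ⟨W', ρ, hρ, x, fac⟩ := surjective_up_to_refinements_of_epi φ k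
    have hxtot : x ≫ φ = (x ≫ biprod.fst) ≫ pushout.inl i u
        + (x ≫ biprod.snd) ≫ pushout.inr i u := by
      calc x ≫ φ = x ≫ (biprod.fst ≫ biprod.inl + biprod.snd ≫ biprod.inr) ≫ φ := by
            rw [biprod.total, Category.id_comp]
        _ = (x ≫ biprod.fst) ≫ pushout.inl i u
            + (x ≫ biprod.snd) ≫ pushout.inr i u := by
            rw [hφ]
            simp only [Preadditive.add_comp, Preadditive.comp_add, Category.assoc,
              biprod.inl_desc, biprod.inr_desc]
    have hkπ : k ≫ π = 0 := hk
    have h6 : (x ≫ φ) ≫ π = 0 := by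
      rw [← fac, Category.assoc, hkπ, comp_zero]
    rw [hxtot] at h6
    simp only [Preadditive.add_comp, Category.assoc, hinl, hinr, comp_zero,
      add_zero] at h6
    have h5 : (x ≫ biprod.fst) ≫ p = 0 := by rw [Category.assoc]; exact h6
    obtain ⟨l, hmi⟩ := hse.exact.lift' (x ≫ biprod.fst) h5
    refine ⟨W', ρ, hρ, l ≫ u + x ≫ biprod.snd, ?_⟩
    have hswap : (x ≫ biprod.fst) ≫ pushout.inl i u
        = (l ≫ u) ≫ pushout.inr i u := by
      rw [← hmi, Category.assoc, pushout.condition, ← Category.assoc]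
    show ρ ≫ k = (l ≫ u + x ≫ biprod.snd) ≫ pushout.inr i u
    rw [fac, hxtot, hswap, ← Preadditive.add_comp]
  exact ⟨pushout i u, pushout.inl i u, pushout.inr i u, π, hinr,
    { exact := hex }, pushout.condition, hinl⟩

/-- Proposition 3.7(1): let `(T, F)` be a torsion theory in the exact
category `P` and `0 → X → Y → Z → 0` an almost split sequence in `P`. If `Z ∈ T` is not
Ext-projective in `T`, then `T` has an induced almost split sequence
`0 → t(X) → t(Y) → Z → 0`. -/
theorem stmt19 {R : Type v} [CommRing R] {C : Type u} [Category.{v} C] [Abelian C]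
    [Linear R C] (P : C → Prop) (hP : ExtClosed P) (T F : C → Prop)
    (hTP : ∀ ⦃A : C⦄, T A → P A) (hFP : ∀ ⦃A : C⦄, F A → P A)
    (hhom : ∀ ⦃A B : C⦄, T A → F B → ∀ h : A ⟶ B, h = 0)
    (hseq : ∀ (W : C), P W → ∃ (tW fW : C) (i : tW ⟶ W) (p : W ⟶ fW) (w : i ≫ p = 0),
      (ShortComplex.mk i p w).ShortExact ∧ T tW ∧ F fW)
    {X Y Z : C} (f : X ⟶ Y) (g : Y ⟶ Z) (w : f ≫ g = 0)
    (hse : (ShortComplex.mk f g w).ShortExact) (hX : P X) (hY : P Y) (hZ : P Z)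
    (hass : AlmostSplitSeq P f g) (hZT : T Z) (hZnp : ¬ ExtProjective T Z) :
    ∃ (TX TY FX FY : C) (qX : TX ⟶ X) (pX : X ⟶ FX) (wX : qX ≫ pX = 0)
      (_ : (ShortComplex.mk qX pX wX).ShortExact) (_ : T TX) (_ : F FX)
      (qY : TY ⟶ Y) (pY : Y ⟶ FY) (wY : qY ≫ pY = 0)
      (_ : (ShortComplex.mk qY pY wY).ShortExact) (_ : T TY) (_ : F FY)
      (f' : TX ⟶ TY) (g' : TY ⟶ Z) (w' : f' ≫ g' = 0)
      (_ : (ShortComplex.mk f' g' w').ShortExact),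
      f' ≫ qY = qX ≫ f ∧ qY ≫ g = g' ∧ AlmostSplitSeq T f' g' := by
  classical
  obtain ⟨hlas, hlmin, hras, hrmin⟩ := hass
  obtain ⟨hfns, hlfac⟩ := hlas
  obtain ⟨hgnr, hrfac⟩ := hras
  haveI hmf : Mono f := hse.mono_f
  haveI heg : Epi g := hse.epi_g
  haveI := hse.mono_f
  haveI := hse.epi_g
  obtain ⟨TX, FX, qX, pX, wX, hseX, hTX, hFX⟩ := hseq X hX
  obtain ⟨TY, FY, qY, pY, wY, hseY, hTY, hFY⟩ := hseq Y hY
  haveI hmqX : Mono qX := hseX.mono_f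
  haveI hepX : Epi pX := hseX.epi_g
  haveI hmqY : Mono qY := hseY.mono_f
  haveI hepY : Epi pY := hseY.epi_g
  haveI := hseX.mono_f
  haveI := hseX.epi_g
  haveI := hseY.mono_f
  haveI := hseY.epi_g
  -- the induced map f' : TX ⟶ TY
  have hqf : (qX ≫ f) ≫ pY = 0 := hhom hTX hFY _
  set f' : TX ⟶ TY := hseY.exact.lift (qX ≫ f) hqf with hf'def
  have hf' : f' ≫ qY = qX ≫ f := hseY.exact.lift_f _ _
  set g' : TY ⟶ Z := qY ≫ g with hg'def
  have w' : f' ≫ g' = 0 := by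
    rw [hg'def, ← Category.assoc, hf', Category.assoc, w, comp_zero]
  haveI hmf' : Mono f' := by
    haveI : Mono (f' ≫ qY) := by rw [hf']; exact mono_comp _ _
    exact mono_of_mono f' qY
  -- a non-split sequence in T ending at Z
  unfold ExtProjective at hZnp
  push_neg at hZnp
  obtain ⟨A, B, fB, gB, wB, hseB, hTA, hTB, hgB⟩ := hZnp
  haveI hmfB : Mono fB := hseB.mono_f
  haveI hegB : Epi gB := hseB.epi_g
  haveI := hseB.mono_f
  haveI := hseB.epi_g
  -- g' is an epimorphism
  obtain ⟨hB, hhB⟩ := hrfac (hTP hTB) gB hgB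
  have hBp : hB ≫ pY = 0 := hhom hTB hFY _
  set hB' : B ⟶ TY := hseY.exact.lift hB hBp with hB'def
  have hB'q : hB' ≫ qY = hB := hseY.exact.lift_f _ _
  have hB'g' : hB' ≫ g' = gB := by
    rw [hg'def, ← Category.assoc, hB'q, hhB]
  haveI heg' : Epi g' := by
    haveI : Epi (hB' ≫ g') := by rw [hB'g']; infer_instance
    exact epi_of_epi hB' g'
  -- the map pX is not a section
  have hpXns : ¬ IsSection pX := by
    rintro ⟨r, hr⟩
    -- then every map from a torsion object to X vanishes
    have hzero : ∀ {A' : C}, T A' → ∀ a : A' ⟶ X, a = 0 := by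
      intro A' hA' a
      have h0 : a ≫ pX = 0 := hhom hA' hFX _
      calc a = a ≫ (pX ≫ r) := by rw [hr, Category.comp_id]
        _ = (a ≫ pX) ≫ r := by rw [Category.assoc]
        _ = 0 := by rw [h0, zero_comp]
    have h1 : (fB ≫ hB) ≫ g = 0 := by
      rw [Category.assoc, hhB, wB]
    set a : A ⟶ X := hse.exact.lift (fB ≫ hB) h1 with hadef
    have haf : a ≫ f = fB ≫ hB := hse.exact.lift_f _ _
    have ha0 : a = 0 := hzero hTA a
    have hfBhB : fB ≫ hB = 0 := by rw [← haf, ha0, zero_comp]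
    set s : Z ⟶ Y := hseB.exact.desc hB hfBhB with hsdef
    have hs : gB ≫ s = hB := hseB.exact.g_desc _ _
    have hsg : s ≫ g = 𝟙 Z := by
      rw [← cancel_epi gB, ← Category.assoc, hs, hhB, Category.comp_id]
    exact hgnr ⟨s, hsg⟩
  obtain ⟨h2, hh2⟩ := hlfac (hFP hFX) pX hpXns
  -- exactness of 0 → TX → TY → Z → 0
  have hexact' : (ShortComplex.mk f' g' w').Exact := by
    rw [ShortComplex.exact_iff_exact_up_to_refinements]
    intro W k hk
    have hk0 : k ≫ g' = 0 := hk
    have hk' : (k ≫ qY) ≫ g = 0 := by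
      rw [Category.assoc, ← hg'def, hk0]
    set j : W ⟶ X := hse.exact.lift (k ≫ qY) hk' with hjdef
    have hj : j ≫ f = k ≫ qY := hse.exact.lift_f _ _
    have hq2 : qY ≫ h2 = 0 := hhom hTY hFX _
    have hjp : j ≫ pX = 0 := by
      rw [← hh2, ← Category.assoc, hj, Category.assoc, hq2, comp_zero]
    set j' : W ⟶ TX := hseX.exact.lift j hjp with hj'def
    have hj' : j' ≫ qX = j := hseX.exact.lift_f _ _
    have hfac : j' ≫ f' = k := by
      rw [← cancel_mono qY, Category.assoc, hf', ← Category.assoc, hj', hj]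
    exact ⟨W, 𝟙 W, inferInstance, j', by rw [Category.id_comp]; exact hfac.symm⟩
  have hse' : (ShortComplex.mk f' g' w').ShortExact := { exact := hexact' }
  -- f' is not a section
  have hf'ns : ¬ IsSection f' := by
    rintro ⟨r', hr'⟩
    have hco : f' ≫ (𝟙 TY - r' ≫ f') = 0 := by
      rw [Preadditive.comp_sub, Category.comp_id, ← Category.assoc, hr',
        Category.id_comp, sub_self]
    haveI : Epi (ShortComplex.mk f' g' w').g := hse'.epi_g
    set s : Z ⟶ TY := hse'.exact.desc (𝟙 TY - r' ≫ f') hco with hsdef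
    have hs : g' ≫ s = 𝟙 TY - r' ≫ f' := hse'.exact.g_desc _ _
    have hsg : s ≫ g' = 𝟙 Z := by
      rw [← cancel_epi g', ← Category.assoc, hs, Preadditive.sub_comp,
        Category.id_comp, Category.assoc, w', comp_zero, sub_zero,
        Category.comp_id]
    refine hgnr ⟨s ≫ qY, ?_⟩
    rw [Category.assoc, ← hg'def, hsg]
  -- left almost split in T
  have hlas' : LeftAlmostSplit T f' := by
    refine ⟨hf'ns, ?_⟩
    intro M hM u hu
    obtain ⟨E, e1, e2, π, w2, hseE, hcomm, he1π⟩ := pushout_ses qX pX wX hseX u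
    haveI : Mono e2 := hseE.mono_f
    have hPE : P E := hP e2 π w2 hseE (hTP hM) (hFP hFX)
    have he1ns : ¬ IsSection e1 := by
      rintro ⟨r, hr⟩
      have hv : (e2 ≫ r) ≫ pX = 0 := hhom hM hFX _
      set v' : M ⟶ TX := hseX.exact.lift (e2 ≫ r) hv with hv'def
      have hv' : v' ≫ qX = e2 ≫ r := hseX.exact.lift_f _ _
      refine hu ⟨v', ?_⟩
      rw [← cancel_mono qX, Category.assoc, hv', ← Category.assoc, ← hcomm,
        Category.assoc, hr, Category.comp_id, Category.id_comp]
    obtain ⟨h3, hh3⟩ := hlfac hPE e1 he1ns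
    have hq3 : (qY ≫ h3) ≫ π = 0 := hhom hTY hFX _
    set h0 : TY ⟶ M := hseE.exact.lift (qY ≫ h3) hq3 with h0def
    have hh0 : h0 ≫ e2 = qY ≫ h3 := hseE.exact.lift_f _ _
    refine ⟨h0, ?_⟩
    rw [← cancel_mono e2, Category.assoc, hh0, ← Category.assoc, hf',
      Category.assoc, hh3, hcomm]
  -- right almost split in T
  have hg'nr : ¬ IsRetraction g' := by
    rintro ⟨s, hs⟩
    refine hgnr ⟨s ≫ qY, ?_⟩
    rw [Category.assoc, ← hg'def, hs]
  have hras' : RightAlmostSplit T g' := by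
    refine ⟨hg'nr, ?_⟩
    intro M hM u hu
    obtain ⟨h4, hh4⟩ := hrfac (hTP hM) u hu
    have h4p : h4 ≫ pY = 0 := hhom hM hFY _
    set h5 : M ⟶ TY := hseY.exact.lift h4 h4p with h5def
    have hh5 : h5 ≫ qY = h4 := hseY.exact.lift_f _ _
    exact ⟨h5, by rw [hg'def, ← Category.assoc, hh5, hh4]⟩
  -- left minimality
  have hlmin' : ∀ h : TY ⟶ TY, f' ≫ h = f' → IsIso h := by
    intro h hfh
    have hd : f' ≫ (h - 𝟙 TY) = 0 := by
      rw [Preadditive.comp_sub, hfh, Category.comp_id, sub_self]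
    haveI : Epi (ShortComplex.mk f' g' w').g := hse'.epi_g
    set d : Z ⟶ TY := hse'.exact.desc (h - 𝟙 TY) hd with hddef
    have hdg : g' ≫ d = h - 𝟙 TY := hse'.exact.g_desc _ _
    have hH : IsIso (𝟙 Y + g ≫ (d ≫ qY)) := by
      apply hlmin
      rw [Preadditive.comp_add, Category.comp_id, ← Category.assoc, w,
        zero_comp, add_zero]
    have h1 : IsIso (𝟙 Z + (d ≫ qY) ≫ g) := isIso_one_add_swap g (d ≫ qY) hH
    have h2' : IsIso (𝟙 Z + d ≫ g') := by
      rw [hg'def, ← Category.assoc]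
      exact h1
    have h3' : IsIso (𝟙 TY + g' ≫ d) := isIso_one_add_swap d g' h2'
    have heq : h = 𝟙 TY + g' ≫ d := by rw [hdg]; abel
    rw [heq]
    exact h3'
  -- right minimality
  have hrmin' : ∀ h : TY ⟶ TY, h ≫ g' = g' → IsIso h := by
    intro h hgh
    have hc0 : (h - 𝟙 TY) ≫ g' = 0 := by
      rw [Preadditive.sub_comp, hgh, Category.id_comp, sub_self]
    haveI : Mono (ShortComplex.mk f' g' w').f := hse'.mono_f
    set c : TY ⟶ TX := hse'.exact.lift (h - 𝟙 TY) hc0 with hcdef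
    have hcf : c ≫ f' = h - 𝟙 TY := hse'.exact.lift_f _ _
    obtain ⟨E, e1, e2, π, w2, hseE, hcomm, he1π⟩ := pushout_ses qY pY wY hseY (c ≫ qX)
    haveI : Mono e2 := hseE.mono_f
    have he2sec : IsSection e2 := by
      by_contra he2
      have hPE : P E := hP e2 π w2 hseE hX (hFP hFY)
      obtain ⟨h6, hh6⟩ := hlfac hPE e2 he2
      have hfh6 : f ≫ (h6 ≫ π) = 0 := by
        rw [← Category.assoc, hh6, w2]
      set z : Z ⟶ FY := hse.exact.desc (h6 ≫ π) hfh6 with hzdef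
      have hz : g ≫ z = h6 ≫ π := hse.exact.g_desc _ _
      have hz0 : z = 0 := hhom hZT hFY z
      have h6π0 : h6 ≫ π = 0 := by rw [← hz, hz0, comp_zero]
      set H' : Y ⟶ X := hseE.exact.lift h6 h6π0 with hH'def
      have hH' : H' ≫ e2 = h6 := hseE.exact.lift_f _ _
      have : f ≫ H' = 𝟙 X := by
        rw [← cancel_mono e2, Category.assoc, hH', hh6, Category.id_comp]
      exact hfns ⟨H', this⟩
    obtain ⟨r, hr⟩ := he2sec
    set Γ : Y ⟶ X := e1 ≫ r with hΓdef
    have hΓ : qY ≫ Γ = c ≫ qX := by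
      rw [hΓdef, ← Category.assoc, hcomm, Category.assoc, hr, Category.comp_id]
    set H : Y ⟶ Y := 𝟙 Y + Γ ≫ f with hHdef
    have hHg : H ≫ g = g := by
      rw [hHdef, Preadditive.add_comp, Category.id_comp, Category.assoc, w,
        comp_zero, add_zero]
    haveI hHiso : IsIso H := hrmin H hHg
    have hqH : qY ≫ H = h ≫ qY := by
      rw [hHdef, Preadditive.comp_add, Category.comp_id, ← Category.assoc, hΓ,
        Category.assoc, ← hf', ← Category.assoc, hcf, Preadditive.sub_comp,
        Category.id_comp]
      abel
    have hinvp : (qY ≫ inv H) ≫ pY = 0 := hhom hTY hFY _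
    set h7 : TY ⟶ TY := hseY.exact.lift (qY ≫ inv H) hinvp with h7def
    have hh7 : h7 ≫ qY = qY ≫ inv H := hseY.exact.lift_f _ _
    have hhh7 : h ≫ h7 = 𝟙 TY := by
      rw [← cancel_mono qY, Category.assoc, hh7, ← Category.assoc, ← hqH,
        Category.assoc, IsIso.hom_inv_id, Category.comp_id, Category.id_comp]
    have hh7h : h7 ≫ h = 𝟙 TY := by
      rw [← cancel_mono qY, Category.assoc, ← hqH, ← Category.assoc, hh7,
        Category.assoc, IsIso.inv_hom_id, Category.comp_id, Category.id_comp]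
    exact ⟨h7, hhh7, hh7h⟩
  exact ⟨TX, TY, FX, FY, qX, pX, wX, hseX, hTX, hFX, qY, pY, wY, hseY, hTY, hFY,
    f', g', w', hse', hf', rfl, hlas', hlmin', hras', hrmin'⟩

end AlmostSplit
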